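/- arXiv:1407.5030 — 2 statements merged into one kernel-verified Lean document; each statement's English description precedes it below -/
import Mathlib

section
/- In an MCR game all of whose vertices have finite value, the non-increasing sequence of i-step values (val_i)_{i≥0} converges pointwise to the value vector Val, and Val is the greatest fixed point of the operator F. -/
open Filter

/-- A two-player turn-based weighted game graph. `owner v = true` means that
vertex `v` belongs to player Max, `owner v = false` that it belongs to player Min.
Every vertex has at least one successor. -/
structure Game (V : Type) where
  owner : V → Bool
  E : V → V → Prop
  nonempty : ∀ v, ∃ v', E v v'
  w : V → V → ℤ

namespace Game

variable {V : Type}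

/-- The (reversed) history of the first `k` vertices of `π` (most recent first). -/
def hist (π : ℕ → V) (k : ℕ) : List V := (List.ofFn fun i : Fin k => π i).reverse

/-- A strategy: given the (reversed) list of previously visited vertices and the current
vertex, it picks a successor of the current vertex. -/
structure Strategy (g : Game V) where
  next : List V → V → V
  valid : ∀ h v, g.E v (next h v)

/-- A memoryless strategy only depends on the current vertex. -/
def Strategy.Memoryless {g : Game V} (s : g.Strategy) : Prop :=
  ∀ h h' v, s.next h v = s.next h' v

/-- A finite-memory strategy is one encoded by a deterministic Moore machine
`⟨M, m0, up, dec⟩`: the choice after a finite play is `dec` applied to the memory state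
reached by reading the play (the initial vertex is not read) and to the last vertex. -/
def Strategy.FiniteMemory {g : Game V} (s : g.Strategy) : Prop :=
  ∃ (M : Type) (_ : Fintype M) (m0 : M) (up : M → V → M) (dec : M → V → V),
    ∀ h v, s.next h v = dec (List.foldl up m0 (((h.reverse ++ [v]).drop 1))) v

variable (g : Game V)

/-- Next vertex chosen by the owner of the current vertex. -/
def step (σ τ : g.Strategy) (h : List V) (v : V) : V :=
  if g.owner v then σ.next h v else τ.next h v

/-- Current vertex and reversed history after `k` steps of the play `Play(v, σ, τ)`. -/
def playAux (σ τ : g.Strategy) (v : V) : ℕ → V × List V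
  | 0 => (v, [])
  | k+1 =>
      let p := playAux σ τ v k
      (g.step σ τ p.2 p.1, p.1 :: p.2)

/-- `Play(v, σ, τ)`: the unique play starting in `v` and conforming to the
strategy `σ` of Max and the strategy `τ` of Min. -/
def play (σ τ : g.Strategy) (v : V) (k : ℕ) : V := (g.playAux σ τ v k).1

/-- An infinite sequence of vertices is a play when consecutive vertices are linked
by edges. -/
def IsPlay (π : ℕ → V) : Prop := ∀ k, g.E (π k) (π (k+1))

/-- A play conforms to a strategy `s` of the player `p` if, whenever the current vertex
belongs to `p`, the next vertex is the one prescribed by `s`. -/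
def Conforms (p : Bool) (s : g.Strategy) (π : ℕ → V) : Prop :=
  ∀ k, g.owner (π k) = p → π (k+1) = s.next (hist π k) (π k)

/-- Total-payoff of the prefix of length `k`: the sum of the first `k` edge weights. -/
def TPfin (π : ℕ → V) (k : ℕ) : ℤ := ∑ i ∈ Finset.range k, g.w (π i) (π (i+1))

/-- Total payoff of an infinite play: `liminf` of the payoffs of its prefixes. -/
noncomputable def TP (π : ℕ → V) : EReal :=
  liminf (fun k => (((g.TPfin π k : ℤ) : ℝ) : EReal)) atTop

/-- Mean payoff of an infinite play. -/
noncomputable def MP (π : ℕ → V) : EReal :=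
  liminf (fun k => ((((g.TPfin π k : ℤ) : ℝ) / (k : ℝ)) : EReal)) atTop

open Classical in
/-- Min-cost reachability payoff with target `t`: total payoff up to the first visit
of `t`, and `+∞` if `t` is never visited. -/
noncomputable def MCR (t : V) (π : ℕ → V) : EReal :=
  if h : ∃ k, π k = t then (((g.TPfin π (Nat.find h) : ℤ) : ℝ) : EReal) else ⊤

open Classical in
/-- `MCR` payoff restricted to reaching the target among the first `i+1` vertices. -/
noncomputable def MCRbd (t : V) (i : ℕ) (π : ℕ → V) : EReal :=
  if ∃ k ≤ i, π k = t then g.MCR t π else ⊤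

/-- Value of a strategy `σ` of Max from `v` : `inf_τ P(Play(v, σ, τ))`. -/
noncomputable def valMax (P : (ℕ → V) → EReal) (v : V) (σ : g.Strategy) : EReal :=
  ⨅ τ : g.Strategy, P (g.play σ τ v)

/-- Value of a strategy `τ` of Min from `v` : `sup_σ P(Play(v, σ, τ))`. -/
noncomputable def valMin (P : (ℕ → V) → EReal) (v : V) (τ : g.Strategy) : EReal :=
  ⨆ σ : g.Strategy, P (g.play σ τ v)

/-- Lower value `Val⁻(v) = sup_σ inf_τ P(Play(v, σ, τ))`. -/
noncomputable def lowerVal (P : (ℕ → V) → EReal) (v : V) : EReal :=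
  ⨆ σ : g.Strategy, g.valMax P v σ

/-- Upper value `Val⁺(v) = inf_τ sup_σ P(Play(v, σ, τ))`. -/
noncomputable def upperVal (P : (ℕ → V) → EReal) (v : V) : EReal :=
  ⨅ τ : g.Strategy, g.valMin P v τ

end Game

/-- A min-cost reachability game: a game together with a target vertex `t` whose only
outgoing edge is a self-loop of weight `0`. -/
structure MCRGame (V : Type) extends Game V where
  t : V
  loop : E t t
  loopOnly : ∀ v, E t v → v = t
  loopZero : w t t = 0

/-- The value of a (determined) MCR game. -/
noncomputable def MCRGame.Val {V : Type} (G : MCRGame V) : V → EReal :=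
  fun v => G.toGame.lowerVal (G.toGame.MCR G.t) v

/-- The `i`-step value `val_i(v) = inf_τ sup_σ MCR_i(Play(v, σ, τ))`. -/
noncomputable def MCRGame.ival {V : Type} (G : MCRGame V) (i : ℕ) : V → EReal :=
  fun v => G.toGame.upperVal (G.toGame.MCRbd G.t i) v

open Classical in
/-- The one-step operator `F` of an MCR game with target `t`. -/
noncomputable def Fop {V : Type} (g : Game V) (t : V) (x : V → EReal) : V → EReal :=
  fun v =>
    if v = t then 0
    else if g.owner v = true then
      ⨆ v' ∈ {u | g.E v u}, ((((g.w v v' : ℤ) : ℝ) : EReal) + x v')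
    else
      ⨅ v' ∈ {u | g.E v u}, ((((g.w v v' : ℤ) : ℝ) : EReal) + x v')

/-! Min can guarantee `val_{i+1} ≤ F val_i`: at his own vertices he moves to a successor and
then plays a near-optimal `i`-step strategy from there, and at Max's vertices he commits in
advance to one such strategy per successor. Since every vertex has finitely many successors,
`F` commutes with the infimum of the antitone sequence `val_i`, so `⨅ i, val_i` is a
post-fixed point of `F`. Conversely, against any post-fixed point `x` of `F`, Max's greedy
strategy makes `x(v) ≤ w(v, v') + x(v')` hold along every play; telescoping up to the target,
where `x ≤ 0`, bounds the payoff below by `x(v)`, so every post-fixed point lies below `Val`.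
With weak duality `Val ≤ val_i` this gives `⨅ i, val_i = Val`, and as for Knaster–Tarski the
monotone `F` then fixes `Val` as its greatest fixed point. -/

namespace EReal

theorem coe_add_iInf {ι : Sort*} (r : ℝ) (f : ι → EReal) :
    (r : EReal) + ⨅ i, f i = ⨅ i, (r : EReal) + f i :=
  (StrictMono.orderIsoOfSurjective (fun x => (r : EReal) + x)
    (fun _ _ h => add_lt_add_left_coe h r)
    (fun x => ⟨x - r, by simp only [add_comm (r : EReal), sub_add_cancel]⟩)).map_iInf f

end EReal

namespace Game

variable {V : Type} {g : Game V}

instance : Nonempty g.Strategy :=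
  ⟨⟨fun _ v => (g.nonempty v).choose, fun _ v => (g.nonempty v).choose_spec⟩⟩

namespace Strategy

theorem ext {s₁ s₂ : g.Strategy} (h : s₁.next = s₂.next) : s₁ = s₂ := by
  cases s₁; cases s₂; cases h; rfl

/-- The strategy `s` seen from the second position of a play starting in `v`. -/
def shift (v : V) (s : g.Strategy) : g.Strategy :=
  ⟨fun h u => s.next (h ++ [v]) u, fun _ _ => s.valid _ _⟩

open Classical in
/-- Move from `v` to `u` at the start of a play, then follow `s` as if the play started in `u`. -/
noncomputable def cons (v u : V) (hu : g.E v u) (s : g.Strategy) : g.Strategy where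
  next h x := if h = [] ∧ x = v then u else s.next h.dropLast x
  valid h x := by
    split_ifs with hx
    · exact hx.2 ▸ hu
    · exact s.valid _ _

theorem cons_next_nil (v u : V) (hu : g.E v u) (s : g.Strategy) :
    (cons v u hu s).next [] v = u := by
  simp [cons]

theorem shift_cons (v u : V) (hu : g.E v u) (s : g.Strategy) : shift v (cons v u hu s) = s := by
  apply ext
  funext h x
  simp [shift, cons]

/-- Follow `fam u` on plays starting in `u`; the start of a play is the last entry of its
reversed history. -/
def byInitial (fam : V → g.Strategy) : g.Strategy :=
  ⟨fun h x => (fam (h.getLastD x)).next h x, fun _ _ => (fam _).valid _ _⟩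

end Strategy

open Strategy

variable {σ τ : g.Strategy}

theorem play_succ_eq_step (v : V) (k : ℕ) :
    g.play σ τ v (k + 1) = g.step σ τ (g.playAux σ τ v k).2 (g.play σ τ v k) :=
  rfl

theorem isPlay_play (v : V) : g.IsPlay (g.play σ τ v) := by
  intro k
  rw [play_succ_eq_step]
  unfold step
  split_ifs
  · exact σ.valid _ _
  · exact τ.valid _ _

theorem playAux_succ (v : V) (k : ℕ) :
    g.playAux σ τ v (k + 1) =
      ((g.playAux (shift v σ) (shift v τ) (g.step σ τ [] v) k).1,
       (g.playAux (shift v σ) (shift v τ) (g.step σ τ [] v) k).2 ++ [v]) := by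
  induction k with
  | zero => rfl
  | succ k ih =>
    change (g.step σ τ (g.playAux σ τ v (k + 1)).2 (g.playAux σ τ v (k + 1)).1,
      (g.playAux σ τ v (k + 1)).1 :: (g.playAux σ τ v (k + 1)).2) = _
    rw [ih]
    rfl

theorem play_succ (v : V) (k : ℕ) :
    g.play σ τ v (k + 1) = g.play (shift v σ) (shift v τ) (g.step σ τ [] v) k := by
  rw [play, playAux_succ]
  rfl

theorem playAux_byInitial (fam : V → g.Strategy) (u : V) (k : ℕ) :
    g.playAux σ (byInitial fam) u k = g.playAux σ (fam u) u k ∧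
      (g.playAux σ (fam u) u k).2.getLastD (g.playAux σ (fam u) u k).1 = u := by
  induction k with
  | zero => exact ⟨rfl, rfl⟩
  | succ k ih =>
    obtain ⟨heq, hstart⟩ := ih
    have hstep : g.step σ (byInitial fam) (g.playAux σ (fam u) u k).2
        (g.playAux σ (fam u) u k).1 =
          g.step σ (fam u) (g.playAux σ (fam u) u k).2 (g.playAux σ (fam u) u k).1 := by
      unfold step byInitial
      dsimp only
      rw [hstart]
    refine ⟨?_, ?_⟩
    · change (g.step σ (byInitial fam) (g.playAux σ (byInitial fam) u k).2
        (g.playAux σ (byInitial fam) u k).1, _ :: _) = _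
      rw [heq, hstep]
      rfl
    · exact List.getLastD_cons.trans hstart

theorem play_byInitial (fam : V → g.Strategy) (u : V) :
    g.play σ (byInitial fam) u = g.play σ (fam u) u := by
  funext k
  rw [play, (playAux_byInitial fam u k).1, play]

variable {t : V}

theorem TPfin_succ (π : ℕ → V) (k : ℕ) :
    g.TPfin π (k + 1) = g.TPfin π k + g.w (π k) (π (k + 1)) :=
  Finset.sum_range_succ _ _

theorem TPfin_succ' (π : ℕ → V) (k : ℕ) :
    g.TPfin π (k + 1) = g.w (π 0) (π 1) + g.TPfin (fun j => π (j + 1)) k := by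
  rw [TPfin, Finset.sum_range_succ', add_comm]
  rfl

open Classical in
theorem MCR_eq_add_MCR_tail {π : ℕ → V} (hπ : π 0 ≠ t) :
    g.MCR t π = ((g.w (π 0) (π 1) : ℝ) : EReal) + g.MCR t (fun k => π (k + 1)) := by
  by_cases hreach : ∃ k, π k = t
  · have hreach' : ∃ k, π (k + 1) = t := by
      obtain ⟨k, hk⟩ := hreach
      cases k with
      | zero => exact absurd hk hπ
      | succ k => exact ⟨k, hk⟩
    rw [MCR, dif_pos hreach, MCR, dif_pos hreach', Nat.find_comp_succ hreach hreach' hπ,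
      TPfin_succ']
    push_cast
    rfl
  · have hreach' : ¬∃ k, π (k + 1) = t := fun ⟨k, hk⟩ => hreach ⟨k + 1, hk⟩
    rw [MCR, dif_neg hreach, MCR, dif_neg hreach', EReal.coe_add_top]

theorem MCRbd_succ {π : ℕ → V} (hπ : π 0 ≠ t) (i : ℕ) :
    g.MCRbd t (i + 1) π =
      ((g.w (π 0) (π 1) : ℝ) : EReal) + g.MCRbd t i (fun k => π (k + 1)) := by
  have hiff : (∃ k ≤ i + 1, π k = t) ↔ ∃ k ≤ i, π (k + 1) = t := by
    constructor
    · rintro ⟨_ | k, hk, hkt⟩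
      · exact absurd hkt hπ
      · exact ⟨k, by omega, hkt⟩
    · rintro ⟨k, hk, hkt⟩
      exact ⟨k + 1, by omega, hkt⟩
  by_cases hreach : ∃ k ≤ i, π (k + 1) = t
  · rw [MCRbd, if_pos (hiff.mpr hreach), MCRbd, if_pos hreach, MCR_eq_add_MCR_tail hπ]
  · rw [MCRbd, if_neg (hiff.not.mpr hreach), MCRbd, if_neg hreach, EReal.coe_add_top]

open Classical in
theorem MCRbd_of_zero_eq {π : ℕ → V} (hπ : π 0 = t) (i : ℕ) : g.MCRbd t i π = 0 := by
  have hreach : ∃ k, π k = t := ⟨0, hπ⟩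
  rw [MCRbd, if_pos ⟨0, i.zero_le, hπ⟩, MCR, dif_pos hreach, (Nat.find_eq_zero hreach).mpr hπ]
  simp [TPfin]

theorem MCRbd_antitone (π : ℕ → V) : Antitone fun i => g.MCRbd t i π := by
  intro i j hij
  change g.MCRbd t j π ≤ g.MCRbd t i π
  by_cases hreach : ∃ k ≤ i, π k = t
  · obtain ⟨k, hk, hkt⟩ := hreach
    rw [MCRbd, if_pos ⟨k, hk.trans hij, hkt⟩, MCRbd, if_pos ⟨k, hk, hkt⟩]
  · exact (if_neg hreach).trans_ge le_top

theorem MCR_le_MCRbd (π : ℕ → V) (i : ℕ) : g.MCR t π ≤ g.MCRbd t i π := by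
  rw [MCRbd]
  split_ifs
  · exact le_rfl
  · exact le_top

theorem le_TPfin_add {x : V → EReal} {π : ℕ → V}
    (hstep : ∀ k, x (π k) ≤ ((g.w (π k) (π (k + 1)) : ℝ) : EReal) + x (π (k + 1)))
    (k : ℕ) :
    x (π 0) ≤ ((g.TPfin π k : ℝ) : EReal) + x (π k) := by
  induction k with
  | zero => simp [TPfin]
  | succ k ih =>
    calc x (π 0) ≤ ((g.TPfin π k : ℝ) : EReal) + x (π k) := ih
      _ ≤ ((g.TPfin π k : ℝ) : EReal) +
            (((g.w (π k) (π (k + 1)) : ℝ) : EReal) + x (π (k + 1))) :=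
        add_le_add_right (hstep k) _
      _ = ((g.TPfin π (k + 1) : ℝ) : EReal) + x (π (k + 1)) := by
        rw [TPfin_succ, ← add_assoc]
        push_cast
        rfl

open Classical in
theorem le_MCR_of_forall_le {x : V → EReal} {π : ℕ → V} (ht : x t ≤ 0)
    (hstep : ∀ k, x (π k) ≤ ((g.w (π k) (π (k + 1)) : ℝ) : EReal) + x (π (k + 1))) :
    x (π 0) ≤ g.MCR t π := by
  rw [MCR]
  split_ifs with hreach
  · calc x (π 0) ≤ ((g.TPfin π (Nat.find hreach) : ℝ) : EReal) + x (π (Nat.find hreach)) :=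
          le_TPfin_add hstep _
      _ ≤ ((g.TPfin π (Nat.find hreach) : ℝ) : EReal) + 0 := by
          rw [Nat.find_spec hreach]
          exact add_le_add_right ht _
      _ = _ := add_zero _
  · exact le_top

theorem MCRbd_play_succ {σ τ : g.Strategy} {v : V} (hv : v ≠ t) (i : ℕ) :
    g.MCRbd t (i + 1) (g.play σ τ v) = ((g.w v (g.step σ τ [] v) : ℝ) : EReal) +
      g.MCRbd t i (g.play (shift v σ) (shift v τ) (g.step σ τ [] v)) := by
  rw [MCRbd_succ hv]
  congr
  funext k
  exact play_succ v k

end Game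

section Fop

variable {V : Type} {g : Game V} {t : V} {x : V → EReal} {v : V}

theorem Fop_of_owner_true (hv : v ≠ t) (ho : g.owner v = true) :
    Fop g t x v = ⨆ u : {u // g.E v u}, ((g.w v u : ℝ) : EReal) + x u := by
  rw [Fop, if_neg hv, if_pos ho, iSup_subtype']
  rfl

theorem Fop_of_owner_false (hv : v ≠ t) (ho : g.owner v = false) :
    Fop g t x v = ⨅ u : {u // g.E v u}, ((g.w v u : ℝ) : EReal) + x u := by
  rw [Fop, if_neg hv, if_neg (by simp [ho]), iInf_subtype']
  rfl

theorem Fop_mono : Monotone (Fop g t) := by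
  intro x y hxy v
  unfold Fop
  split_ifs
  · exact le_rfl
  · exact iSup₂_mono fun u _ => add_le_add_right (hxy u) _
  · exact iInf₂_mono fun u _ => add_le_add_right (hxy u) _

theorem Fop_iInf_of_antitone [Finite V] {x : ℕ → V → EReal} (hx : Antitone x) :
    Fop g t (⨅ i, x i) = ⨅ i, Fop g t (x i) := by
  funext v
  by_cases hv : v = t
  · simp [Fop, hv]
  cases ho : g.owner v
  · simp only [iInf_apply, Fop_of_owner_false hv ho, EReal.coe_add_iInf]
    exact iInf_comm
  · simp only [iInf_apply, Fop_of_owner_true hv ho, EReal.coe_add_iInf]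
    exact (iInf_iSup_of_antitone fun (u : {u // g.E v u}) _ _ hij =>
      add_le_add_right (hx hij u) ((g.w v u : ℝ) : EReal)).symm

theorem exists_strategy_le_of_le_Fop [Finite V] (hx : x ≤ Fop g t x) :
    ∃ σ : g.Strategy, ∀ h v, g.owner v = true → v ≠ t →
      x v ≤ ((g.w v (σ.next h v) : ℝ) : EReal) + x (σ.next h v) := by
  have hbest : ∀ v, ∃ u, g.E v u ∧
      (g.owner v = true → v ≠ t → x v ≤ ((g.w v u : ℝ) : EReal) + x u) := by
    intro v
    obtain ⟨u₀, hu₀⟩ := g.nonempty v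
    by_cases hv : g.owner v = true ∧ v ≠ t
    · have : Nonempty {u // g.E v u} := ⟨⟨u₀, hu₀⟩⟩
      obtain ⟨u, hu⟩ :=
        Finite.exists_max fun u : {u // g.E v u} => ((g.w v u : ℝ) : EReal) + x u
      refine ⟨u, u.2, fun _ _ => (hx v).trans ?_⟩
      rw [Fop_of_owner_true hv.2 hv.1]
      exact iSup_le hu
    · exact ⟨u₀, hu₀, fun ho hvt => absurd ⟨ho, hvt⟩ hv⟩
  choose m hmE hm using hbest
  exact ⟨⟨fun _ v => m v, fun _ v => hmE v⟩, fun _ v => hm v⟩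

end Fop

namespace MCRGame

open Game Game.Strategy

variable {V : Type} (G : MCRGame V)

theorem ival_target (i : ℕ) : G.ival i G.t = 0 := by
  have h : ∀ σ τ, G.MCRbd G.t i (G.play σ τ G.t) = 0 := fun _ _ => MCRbd_of_zero_eq rfl i
  simp [ival, upperVal, valMin, h]

theorem ival_antitone (v : V) : Antitone fun i => G.ival i v :=
  fun _ _ hij => iInf_mono fun _ => iSup_mono fun _ => MCRbd_antitone _ hij

theorem Val_le_ival (i : ℕ) (v : V) : G.Val v ≤ G.ival i v :=
  (iSup_iInf_le_iInf_iSup _).trans (iInf_mono fun _ => iSup_mono fun _ => MCR_le_MCRbd _ _)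

theorem ival_succ_le_of_owner_false {i : ℕ} {v u : V} (hv : v ≠ G.t) (ho : G.owner v = false)
    (hu : G.E v u) (τ : G.Strategy) :
    G.ival (i + 1) v ≤ ((G.w v u : ℝ) : EReal) + G.valMin (G.MCRbd G.t i) u τ := by
  refine iInf_le_of_le (cons v u hu τ) (iSup_le fun σ => ?_)
  have hmove : G.step σ (cons v u hu τ) [] v = u := by
    simp [step, ho, cons_next_nil]
  rw [MCRbd_play_succ hv, hmove, shift_cons]
  exact add_le_add_right (le_iSup (fun σ' => G.MCRbd G.t i (G.play σ' τ u)) (shift v σ)) _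

theorem ival_succ_le_of_owner_true {i : ℕ} {v : V} (hv : v ≠ G.t) (ho : G.owner v = true)
    (fam : {u // G.E v u} → G.Strategy) :
    G.ival (i + 1) v ≤
      ⨆ u : {u // G.E v u}, ((G.w v u : ℝ) : EReal) + G.valMin (G.MCRbd G.t i) u (fam u) := by
  classical
  obtain ⟨u₀, hu₀⟩ := G.nonempty v
  let fam' (u : V) : G.Strategy := if hu : G.E v u then fam ⟨u, hu⟩ else fam ⟨u₀, hu₀⟩
  refine iInf_le_of_le (cons v u₀ hu₀ (byInitial fam')) (iSup_le fun σ => ?_)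
  have hmove : G.step σ (cons v u₀ hu₀ (byInitial fam')) [] v = σ.next [] v := by
    simp [step, ho]
  rw [MCRbd_play_succ hv, hmove, shift_cons, play_byInitial]
  refine le_iSup_of_le ⟨σ.next [] v, σ.valid [] v⟩ (add_le_add_right ?_ _)
  simp only [fam', dif_pos (σ.valid [] v)]
  exact le_iSup (fun σ' => G.MCRbd G.t i (G.play σ' (fam _) _)) (shift v σ)

theorem ival_succ_le_Fop (i : ℕ) : G.ival (i + 1) ≤ Fop G.toGame G.t (G.ival i) := by
  intro v
  by_cases hv : v = G.t
  · rw [hv, ival_target, Fop, if_pos rfl]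
  cases ho : G.owner v
  · rw [Fop_of_owner_false hv ho]
    refine le_iInf fun u => ?_
    conv_rhs => rw [ival, upperVal, EReal.coe_add_iInf]
    exact le_iInf (ival_succ_le_of_owner_false G hv ho u.2)
  · rw [Fop_of_owner_true hv ho]
    conv_rhs => simp only [ival, upperVal, EReal.coe_add_iInf, iSup_iInf_eq]
    exact le_iInf (ival_succ_le_of_owner_true G hv ho)

theorem le_Val_of_le_Fop [Finite V] {x : V → EReal} (hx : x ≤ Fop G.toGame G.t x) :
    x ≤ G.Val := by
  obtain ⟨σ, hσ⟩ := exists_strategy_le_of_le_Fop hx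
  have ht : x G.t ≤ 0 := by simpa [Fop] using hx G.t
  intro v
  refine le_iSup_of_le σ (le_iInf fun τ => ?_)
  set π := G.play σ τ v
  refine le_MCR_of_forall_le (π := π) ht fun k => ?_
  by_cases hk : π k = G.t
  · have hnext : π (k + 1) = G.t := G.loopOnly _ (hk ▸ isPlay_play v k)
    simp [hk, hnext, G.loopZero]
  cases ho : G.owner (π k)
  · have hstep := hx (π k)
    rw [Fop_of_owner_false hk ho] at hstep
    exact hstep.trans (iInf_le_of_le ⟨π (k + 1), isPlay_play v k⟩ le_rfl)
  · have hnext : π (k + 1) = σ.next (G.playAux σ τ v k).2 (π k) := by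
      simp [π, play_succ_eq_step, step, ho]
    rw [hnext]
    exact hσ _ _ ho hk

theorem iInf_ival_le_Fop [Finite V] : ⨅ i, G.ival i ≤ Fop G.toGame G.t (⨅ i, G.ival i) := by
  rw [Fop_iInf_of_antitone fun i j hij v => G.ival_antitone v hij]
  exact le_iInf fun i => (iInf_le _ (i + 1)).trans (G.ival_succ_le_Fop i)

theorem iInf_ival_eq_Val [Finite V] : ⨅ i, G.ival i = G.Val :=
  le_antisymm (G.le_Val_of_le_Fop G.iInf_ival_le_Fop) (le_iInf fun i v => G.Val_le_ival i v)

theorem Val_le_Fop_Val [Finite V] : G.Val ≤ Fop G.toGame G.t G.Val :=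
  G.iInf_ival_eq_Val ▸ G.iInf_ival_le_Fop

end MCRGame

theorem statement_9_general {V : Type} [Fintype V] (G : MCRGame V) :
    (∀ v : V, Filter.Tendsto (fun i => G.ival i v) Filter.atTop (nhds (G.Val v)))
    ∧ Fop G.toGame G.t G.Val = G.Val
    ∧ ∀ x : V → EReal, Fop G.toGame G.t x = x → x ≤ G.Val := by
  refine ⟨fun v => ?_, ?_, fun x hx => G.le_Val_of_le_Fop hx.ge⟩
  · have hlim := tendsto_atTop_iInf (G.ival_antitone v)
    rwa [← iInf_apply, G.iInf_ival_eq_Val] at hlim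
  · exact le_antisymm (G.le_Val_of_le_Fop (Fop_mono G.Val_le_Fop_Val)) G.Val_le_Fop_Val

/-- in an MCR game all of whose vertices have finite value, the sequence
`(val_i)` converges pointwise to the value vector `Val`, and `Val` is the greatest fixed
point of the operator `F`. -/
theorem statement_9 {V : Type} [Fintype V] (G : MCRGame V)
    (hfin : ∀ v : V, ∃ m : ℤ, G.Val v = ((m : ℝ) : EReal)) :
    (∀ v : V, Filter.Tendsto (fun i => G.ival i v) Filter.atTop (nhds (G.Val v)))
    ∧ Fop G.toGame G.t G.Val = G.Val
    ∧ ∀ x : V → EReal, Fop G.toGame G.t x = x → x ≤ G.Val :=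
  statement_9_general G
end

section
/- Let G be a total-payoff game and v a vertex. If σ is a memoryless strategy for Max such that Val(v, σ) ≠ −∞, then every finite play starting in v and conforming to σ satisfies TP(π) ≥ −(|V|−1)·W. Symmetrically, if τ is a memoryless strategy for Min such that Val(v, τ) ≠ +∞, then every finite play starting in v and conforming to τ satisfies TP(π) ≤ (|V|−1)·W. -/
open Filter

/-!
A finite play from `v` conforming to a memoryless `σ` is a path in the graph where every vertex
of Max keeps only the edge chosen by `σ`. If its weight is below `-(|V|-1)·W`, it has at least
`|V|` edges and so repeats a vertex; cutting out a cycle of nonnegative weight keeps the weight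
that low, so repeating this must eventually expose a negative cycle. The play that reaches that
cycle and loops on it forever has total payoff `-∞`, and Min can force it against `σ` because
`σ` ignores the history, so `Val(v, σ) = -∞`. The claim for Min is the same argument with the
weights negated.
-/

namespace Game

variable {V : Type}

section PathWeight

variable (w : V → V → ℤ)

def pathWeight (π : ℕ → V) (n : ℕ) : ℤ := ∑ i ∈ Finset.range n, w (π i) (π (i + 1))

variable {w}

lemma pathWeight_succ (π : ℕ → V) (n : ℕ) :
    pathWeight w π (n + 1) = pathWeight w π n + w (π n) (π (n + 1)) :=
  Finset.sum_range_succ _ _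

lemma pathWeight_neg (π : ℕ → V) : pathWeight (-w) π = -pathWeight w π := by
  ext n
  simp [pathWeight]

lemma pathWeight_congr {π π' : ℕ → V} {n : ℕ} (h : ∀ k ≤ n, π k = π' k) :
    pathWeight w π n = pathWeight w π' n :=
  Finset.sum_congr rfl fun i hi => by
    rw [Finset.mem_range] at hi
    rw [h i hi.le, h (i + 1) hi]

lemma neg_mul_le_pathWeight {π : ℕ → V} {n W : ℕ}
    (hW : ∀ i < n, |w (π i) (π (i + 1))| ≤ W) : -(n * W : ℤ) ≤ pathWeight w π n := by
  have : ∑ _i ∈ Finset.range n, (-W : ℤ) ≤ pathWeight w π n :=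
    Finset.sum_le_sum fun i hi => neg_le_of_abs_le (hW i (Finset.mem_range.1 hi))
  simpa using this

lemma pathWeight_add_period {π : ℕ → V} {i d : ℕ} (hper : ∀ k ≥ i, π (k + d) = π k)
    {k : ℕ} (hk : i ≤ k) :
    pathWeight w π (k + d) =
      pathWeight w π k + (pathWeight w π (i + d) - pathWeight w π i) := by
  induction k, hk using Nat.le_induction with
  | base => ring
  | succ k hk ih =>
    rw [show k + 1 + d = k + d + 1 by omega, pathWeight_succ, pathWeight_succ, ih,
      show k + d + 1 = k + 1 + d by omega, hper k hk, hper (k + 1) (by omega)]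
    ring

lemma tendsto_pathWeight_atBot_of_periodic {π : ℕ → V} {i d : ℕ} (hd : 0 < d)
    (hper : ∀ k ≥ i, π (k + d) = π k) (hneg : pathWeight w π (i + d) < pathWeight w π i) :
    Tendsto (pathWeight w π) atTop atBot := by
  set c := pathWeight w π (i + d) - pathWeight w π i
  have hmul : ∀ r q, pathWeight w π (i + r + q * d) = pathWeight w π (i + r) + q * c := by
    intro r q
    induction q with
    | zero => simp
    | succ q ih =>
      rw [show i + r + (q + 1) * d = i + r + q * d + d by ring,
        pathWeight_add_period hper (by omega), ih]
      push_cast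
      ring
  obtain ⟨M, hM⟩ := ((Set.finite_lt_nat d).image fun r => pathWeight w π (i + r)).bddAbove
  refine tendsto_atBot.2 fun B => eventually_atTop.2 ⟨i + (M - B).toNat * d, fun k hk => ?_⟩
  obtain ⟨r, q, hr, hkq⟩ : ∃ r q, r < d ∧ k = i + r + q * d :=
    ⟨(k - i) % d, (k - i) / d, Nat.mod_lt _ hd, by
      have := Nat.mod_add_div (k - i) d
      rw [Nat.mul_comm] at this
      omega⟩
  have hq : (M - B).toNat ≤ q := by
    by_contra! h
    have : (q + 1) * d ≤ (M - B).toNat * d := Nat.mul_le_mul_right d h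
    nlinarith
  have hMr : pathWeight w π (i + r) ≤ M := hM ⟨r, hr, rfl⟩
  have hc : c ≤ -1 := by omega
  rw [hkq, hmul]
  have : M - B ≤ ((M - B).toNat : ℤ) := Int.self_le_toNat _
  have : ((M - B).toNat : ℤ) ≤ q := by exact_mod_cast hq
  nlinarith

end PathWeight

section Cycle

variable {R : V → V → Prop} {w : V → V → ℤ}

def lasso (p : ℕ → V) (i j k : ℕ) : V :=
  if k < i then p k else p (i + (k - i) % (j - i))

def shortcut (p : ℕ → V) (i j k : ℕ) : V :=
  if k < i then p k else p (k + (j - i))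

variable {p : ℕ → V} {i j : ℕ}

lemma lasso_of_le (hij : i < j) (hcyc : p i = p j) {k : ℕ} (hk : k ≤ j) :
    lasso p i j k = p k := by
  unfold lasso
  split_ifs with hki
  · rfl
  rcases hk.lt_or_eq with hk | rfl
  · rw [Nat.mod_eq_of_lt (by omega)]
    congr 1
    omega
  · rw [Nat.mod_self, add_zero, hcyc]

lemma lasso_add_period {k : ℕ} (hk : i ≤ k) : lasso p i j (k + (j - i)) = lasso p i j k := by
  simp only [lasso, if_neg (show ¬k + (j - i) < i by omega), if_neg (show ¬k < i by omega),
    show k + (j - i) - i = k - i + (j - i) by omega, Nat.add_mod_right]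

lemma lasso_isPath (hij : i < j) (hcyc : p i = p j) (hp : ∀ k < j, R (p k) (p (k + 1)))
    (k : ℕ) : R (lasso p i j k) (lasso p i j (k + 1)) := by
  induction k using Nat.strong_induction_on with
  | _ k ih =>
    rcases lt_or_ge k j with hk | hk
    · rw [lasso_of_le hij hcyc hk.le, lasso_of_le hij hcyc hk]
      exact hp k hk
    · have := ih (k - (j - i)) (by omega)
      rwa [show k - (j - i) + 1 = k + 1 - (j - i) by omega, ← lasso_add_period (by omega),
        ← lasso_add_period (p := p) (k := k + 1 - (j - i)) (by omega),
        show k - (j - i) + (j - i) = k by omega, show k + 1 - (j - i) + (j - i) = k + 1 by omega]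
        at this

lemma exists_path_tendsto_atBot_of_negCycle (hij : i < j) (hcyc : p i = p j)
    (hp : ∀ k < j, R (p k) (p (k + 1))) (hneg : pathWeight w p j < pathWeight w p i) :
    ∃ f : ℕ → V, f 0 = p 0 ∧ (∀ k, R (f k) (f (k + 1))) ∧
      Tendsto (pathWeight w f) atTop atBot := by
  refine ⟨lasso p i j, lasso_of_le hij hcyc (Nat.zero_le j), lasso_isPath hij hcyc hp,
    tendsto_pathWeight_atBot_of_periodic (by omega) (fun k hk => lasso_add_period hk) ?_⟩
  have hagree : ∀ {n}, n ≤ j → pathWeight w (lasso p i j) n = pathWeight w p n := fun hn =>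
    pathWeight_congr fun k hk => lasso_of_le hij hcyc (hk.trans hn)
  rwa [show i + (j - i) = j by omega, hagree le_rfl, hagree hij.le]


lemma shortcut_of_le (hij : i ≤ j) (hcyc : p i = p j) {k : ℕ} (hk : k ≤ i) :
    shortcut p i j k = p k := by
  unfold shortcut
  split_ifs with hki
  · rfl
  · rw [show k = i by omega, show i + (j - i) = j by omega, hcyc]

lemma shortcut_of_ge {k : ℕ} (hk : i ≤ k) : shortcut p i j k = p (k + (j - i)) :=
  if_neg (by omega)

lemma shortcut_isPath (hij : i ≤ j) (hcyc : p i = p j) {m : ℕ}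
    (hp : ∀ k < j + m, R (p k) (p (k + 1))) :
    ∀ k < i + m, R (shortcut p i j k) (shortcut p i j (k + 1)) := by
  intro k hk
  rcases lt_or_ge k i with hki | hki
  · rw [shortcut_of_le hij hcyc hki.le, shortcut_of_le hij hcyc hki]
    exact hp k (by omega)
  · rw [shortcut_of_ge hki, shortcut_of_ge (by omega),
      show k + 1 + (j - i) = k + (j - i) + 1 by omega]
    exact hp _ (by omega)

lemma pathWeight_shortcut (hij : i ≤ j) (hcyc : p i = p j) (m : ℕ) :
    pathWeight w (shortcut p i j) (i + m) =
      pathWeight w p (j + m) - (pathWeight w p j - pathWeight w p i) := by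
  induction m with
  | zero =>
    rw [add_zero, add_zero, pathWeight_congr fun k hk => shortcut_of_le hij hcyc hk]
    ring
  | succ m ih =>
    rw [← add_assoc, pathWeight_succ, ih, ← add_assoc, pathWeight_succ,
      shortcut_of_ge (by omega), shortcut_of_ge (by omega),
      show i + m + (j - i) = j + m by omega, show i + m + 1 + (j - i) = j + m + 1 by omega]
    ring

end Cycle

lemma exists_lt_le_eq_of_card_le [Fintype V] (p : ℕ → V) {n : ℕ} (hn : Fintype.card V ≤ n) :
    ∃ i j, i < j ∧ j ≤ n ∧ p i = p j := by
  obtain ⟨a, b, hab, heq⟩ :=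
    Fintype.exists_ne_map_eq_of_card_lt (fun k : Fin (n + 1) => p k) (by simpa using hn)
  rcases lt_or_gt_of_ne (Fin.val_ne_of_ne hab) with h | h
  · exact ⟨a, b, h, Nat.lt_succ_iff.1 b.isLt, heq⟩
  · exact ⟨b, a, h, Nat.lt_succ_iff.1 a.isLt, heq.symm⟩

lemma exists_negCycle_of_pathWeight_lt [Fintype V] {R : V → V → Prop} {w : V → V → ℤ}
    {W : ℕ} (hW : ∀ a b, R a b → |w a b| ≤ W) (n : ℕ) (p : ℕ → V)
    (hp : ∀ k < n, R (p k) (p (k + 1)))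
    (hlt : pathWeight w p n < -((Fintype.card V - 1) * W : ℤ)) :
    ∃ q : ℕ → V, ∃ i j, q 0 = p 0 ∧ i < j ∧ q i = q j ∧
      (∀ k < j, R (q k) (q (k + 1))) ∧ pathWeight w q j < pathWeight w q i := by
  induction n using Nat.strong_induction_on generalizing p with
  | _ n ih =>
  rcases lt_or_ge n (Fintype.card V) with hn | hn
  · have := neg_mul_le_pathWeight (w := w) fun k hk => hW _ _ (hp k hk)
    have : (n : ℤ) ≤ Fintype.card V - 1 := by omega
    nlinarith
  obtain ⟨i, j, hij, hjn, hcyc⟩ := exists_lt_le_eq_of_card_le p hn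
  by_cases hneg : pathWeight w p j < pathWeight w p i
  · exact ⟨p, i, j, rfl, hij, hcyc, fun k hk => hp k (by omega), hneg⟩
  obtain ⟨m, rfl⟩ := Nat.exists_eq_add_of_le hjn
  obtain ⟨q, i', j', hq0, hq⟩ := ih (i + m) (by omega) (shortcut p i j)
    (shortcut_isPath hij.le hcyc hp) (by rw [pathWeight_shortcut hij.le hcyc]; omega)
  exact ⟨q, i', j', hq0.trans (shortcut_of_le hij.le hcyc (Nat.zero_le i)), hq⟩

lemma exists_path_tendsto_atBot_of_pathWeight_lt [Fintype V] {R : V → V → Prop}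
    {w : V → V → ℤ} {W : ℕ} (hW : ∀ a b, R a b → |w a b| ≤ W) {n : ℕ} {p : ℕ → V}
    (hp : ∀ k < n, R (p k) (p (k + 1)))
    (hlt : pathWeight w p n < -((Fintype.card V - 1) * W : ℤ)) :
    ∃ f : ℕ → V, f 0 = p 0 ∧ (∀ k, R (f k) (f (k + 1))) ∧
      Tendsto (pathWeight w f) atTop atBot := by
  obtain ⟨q, i, j, hq0, hij, hcyc, hq, hneg⟩ := exists_negCycle_of_pathWeight_lt hW n p hp hlt
  obtain ⟨f, hf0, hf, htend⟩ := exists_path_tendsto_atBot_of_negCycle hij hcyc hq hneg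
  exact ⟨f, hf0.trans hq0, hf, htend⟩

lemma hist_succ (π : ℕ → V) (k : ℕ) : hist π (k + 1) = π k :: hist π k := by
  rw [hist, List.ofFn_succ', List.concat_eq_append, List.reverse_append]
  rfl

@[simp]
lemma length_hist (π : ℕ → V) (k : ℕ) : (hist π k).length = k := by
  simp [hist]

variable (g : Game V)

lemma play_eq_of_forall_step {σ τ : g.Strategy} {π : ℕ → V}
    (hπ : ∀ k, π (k + 1) = g.step σ τ (hist π k) (π k)) : g.play σ τ (π 0) = π := by
  have key : ∀ k, g.playAux σ τ (π 0) k = (π k, hist π k) := by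
    intro k
    induction k with
    | zero => rfl
    | succ k ih => simp only [playAux, ih, hπ, hist_succ]
  funext k
  simp [play, key]

-- Meant for memoryless `s`, for which the empty history is as good as any.
def EdgeUnder (p : Bool) (s : g.Strategy) (a b : V) : Prop :=
  g.E a b ∧ (g.owner a = p → b = s.next [] a)

open Classical in
-- The length of the history tells how far along `f` the play is.
noncomputable def Strategy.follow (f : ℕ → V) : g.Strategy where
  next h v := if g.E v (f (h.length + 1)) then f (h.length + 1) else (g.nonempty v).choose
  valid h v := by
    split_ifs with hE
    · exact hE
    · exact (g.nonempty v).choose_spec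

variable {g}

lemma Strategy.follow_next {f : ℕ → V} {k : ℕ} (hf : g.E (f k) (f (k + 1))) :
    (Strategy.follow g f).next (hist f k) (f k) = f (k + 1) := by
  simp [Strategy.follow, hf]

lemma play_follow_right {σ : g.Strategy} (hσ : σ.Memoryless) {f : ℕ → V}
    (hf : ∀ k, g.EdgeUnder true σ (f k) (f (k + 1))) :
    g.play σ (Strategy.follow g f) (f 0) = f := by
  refine g.play_eq_of_forall_step fun k => ?_
  unfold step
  split_ifs with ho
  · rw [hσ _ [], (hf k).2 ho]
  · rw [Strategy.follow_next (hf k).1]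

lemma play_follow_left {τ : g.Strategy} (hτ : τ.Memoryless) {f : ℕ → V}
    (hf : ∀ k, g.EdgeUnder false τ (f k) (f (k + 1))) :
    g.play (Strategy.follow g f) τ (f 0) = f := by
  refine g.play_eq_of_forall_step fun k => ?_
  unfold step
  split_ifs with ho
  · rw [Strategy.follow_next (hf k).1]
  · rw [hτ _ [], (hf k).2 (by simpa using ho)]

lemma TP_eq_bot {π : ℕ → V} (h : Tendsto (pathWeight g.w π) atTop atBot) : g.TP π = ⊥ :=
  (EReal.tendsto_coe_nhds_bot_iff.2 (tendsto_intCast_atBot_iff.2 h)).liminf_eq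

lemma TP_eq_top {π : ℕ → V} (h : Tendsto (pathWeight g.w π) atTop atTop) : g.TP π = ⊤ :=
  (EReal.tendsto_coe_nhds_top_iff.2 (tendsto_intCast_atTop_iff.2 h)).liminf_eq

lemma valMax_TP_eq_bot {σ : g.Strategy} (hσ : σ.Memoryless) {f : ℕ → V}
    (hf : ∀ k, g.EdgeUnder true σ (f k) (f (k + 1)))
    (htend : Tendsto (pathWeight g.w f) atTop atBot) : g.valMax g.TP (f 0) σ = ⊥ :=
  le_bot_iff.1 <| (iInf_le _ (Strategy.follow g f)).trans_eq <| by
    rw [play_follow_right hσ hf, TP_eq_bot htend]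

lemma valMin_TP_eq_top {τ : g.Strategy} (hτ : τ.Memoryless) {f : ℕ → V}
    (hf : ∀ k, g.EdgeUnder false τ (f k) (f (k + 1)))
    (htend : Tendsto (pathWeight g.w f) atTop atTop) : g.valMin g.TP (f 0) τ = ⊤ :=
  top_le_iff.1 <| (le_iSup (fun σ => g.TP (g.play σ τ (f 0))) (Strategy.follow g f)).trans_eq' <|
    by
    rw [play_follow_left hτ hf, TP_eq_top htend]

end Game

/-- in a total-payoff game, if `σ` is a memoryless strategy of Max with
`Val(v, σ) ≠ −∞`, then every finite play from `v` conforming to `σ` has total payoff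
at least `−(|V|−1)·W`; symmetrically, if `τ` is a memoryless strategy of Min with
`Val(v, τ) ≠ +∞`, then every finite play from `v` conforming to `τ` has total payoff
at most `(|V|−1)·W`. -/
theorem statement_10 {V : Type} [Fintype V] (g : Game V) (W : ℕ)
    (hW : ∀ v v', g.E v v' → |g.w v v'| ≤ (W : ℤ)) (v : V) :
    (∀ σ : g.Strategy, σ.Memoryless → g.valMax g.TP v σ ≠ ⊥ →
      ∀ (π : ℕ → V) (n : ℕ), π 0 = v →
        (∀ i, i < n → g.E (π i) (π (i+1))) →
        (∀ k, k < n → g.owner (π k) = true → π (k+1) = σ.next (Game.hist π k) (π k)) →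
        -(((Fintype.card V : ℤ) - 1) * (W : ℤ)) ≤ g.TPfin π n) ∧
    (∀ τ : g.Strategy, τ.Memoryless → g.valMin g.TP v τ ≠ ⊤ →
      ∀ (π : ℕ → V) (n : ℕ), π 0 = v →
        (∀ i, i < n → g.E (π i) (π (i+1))) →
        (∀ k, k < n → g.owner (π k) = false → π (k+1) = τ.next (Game.hist π k) (π k)) →
        g.TPfin π n ≤ ((Fintype.card V : ℤ) - 1) * (W : ℤ)) := by
  refine ⟨fun σ hσ hval π n h0 hE hC => ?_, fun τ hτ hval π n h0 hE hC => ?_⟩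
  · by_contra! hlt
    obtain ⟨f, hf0, hf, htend⟩ := Game.exists_path_tendsto_atBot_of_pathWeight_lt
      (R := g.EdgeUnder true σ) (fun a b h => hW a b h.1)
      (fun k hk => ⟨hE k hk, fun ho => (hC k hk ho).trans (hσ _ _ _)⟩) hlt
    exact hval (h0 ▸ hf0 ▸ Game.valMax_TP_eq_bot hσ hf htend)
  · by_contra! hlt
    obtain ⟨f, hf0, hf, htend⟩ := Game.exists_path_tendsto_atBot_of_pathWeight_lt
      (R := g.EdgeUnder false τ) (w := -g.w) (fun a b h => by simpa using hW a b h.1)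
      (fun k hk => ⟨hE k hk, fun ho => (hC k hk ho).trans (hτ _ _ _)⟩)
      (by rw [Game.pathWeight_neg, Pi.neg_apply]; exact neg_lt_neg hlt)
    rw [Game.pathWeight_neg] at htend
    exact hval (h0 ▸ hf0 ▸ Game.valMin_TP_eq_top hτ hf (tendsto_neg_atBot_iff.1 htend))
end
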